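/- For 0 ≤ k ≤ n and r, s ≥ 0 with r + s ≤ n − k, let ζ = diag(1_r, −1_s, 0_{n−k−r−s}) and let V^{(k;r,s)} ⊆ ℝ^{2n} be the subspace {(−ζ·v₁, v₂, v₁, 0) : v₁ ∈ ℝ^{n−k}, v₂ ∈ ℝ^k} (coordinates in blocks of sizes n−k, k, n−k, k). Then each V^{(k;r,s)} is a Lagrangian subspace of (ℝ^{2n}, ω), and every Lagrangian subspace λ of (ℝ^{2n}, ω) lies in the L-orbit of some V^{(k;r,s)}: there exist 0 ≤ k ≤ n, r, s ≥ 0 with r + s ≤ n − k, and a ∈ GL_n(ℝ) such that ι(a)·λ = V^{(k;r,s)}. -/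

import Mathlib

open Matrix

/-- `Jₙ = [[0, -1ₙ], [1ₙ, 0]]`. -/
def JJ (n : ℕ) : Matrix (Fin n ⊕ Fin n) (Fin n ⊕ Fin n) ℝ :=
  Matrix.fromBlocks 0 (-1) 1 0

/-- A Lagrangian subspace of `(ℝ^{2n}, ω)`: an `n`-dimensional subspace on which the
symplectic form `ω(u,v) = ᵗu·Jₙ·v` vanishes identically. -/
def IsLagrangian (n : ℕ) (W : Submodule ℝ (Fin n ⊕ Fin n → ℝ)) : Prop :=
  Module.finrank ℝ W = n ∧ ∀ u ∈ W, ∀ v ∈ W, u ⬝ᵥ (JJ n).mulVec v = 0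

/-- `ι(a) = [[a, 0], [0, ᵗa⁻¹]]`. -/
noncomputable def iota (n : ℕ) (a : Matrix (Fin n) (Fin n) ℝ) :
    Matrix (Fin n ⊕ Fin n) (Fin n ⊕ Fin n) ℝ :=
  Matrix.fromBlocks a 0 0 (aᵀ)⁻¹

/-- `ζ = diag(1_r, -1_s, 0, …, 0)` (an `n × n` matrix; only the first `n-k` diagonal
entries are nonzero when `r + s ≤ n - k`). -/
def zetaMat (n r s : ℕ) : Matrix (Fin n) (Fin n) ℝ :=
  Matrix.diagonal fun i => if (i : ℕ) < r then 1 else if (i : ℕ) < r + s then -1 else 0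

/-- The subspace `V^{(k;r,s)} = {(-ζ·v₁, v₂, v₁, 0) : v₁ ∈ ℝ^{n-k}, v₂ ∈ ℝ^k} ⊆ ℝ^{2n}`,
realized as the range of the linear map `v ↦ ((-ζ·v on the first n-k coordinates, v on
the last k coordinates), (v on the first n-k coordinates, 0))`. -/
def Vkrs (n k r s : ℕ) : Submodule ℝ (Fin n ⊕ Fin n → ℝ) :=
  LinearMap.range (Matrix.mulVecLin (Matrix.fromRows
    (Matrix.of fun (i j : Fin n) => if (i : ℕ) < n - k then -(zetaMat n r s i j)
      else (1 : Matrix (Fin n) (Fin n) ℝ) i j)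
    (Matrix.of fun (i j : Fin n) => if (i : ℕ) < n - k then (1 : Matrix (Fin n) (Fin n) ℝ) i j else 0)))

/-
A Lagrangian subspace is the column span of a frame `fromRows X Y` with `ᵗX Y` symmetric and
`ker X ∩ ker Y = 0`, and `ι(a)` together with a change of basis `g` of the frame acts by
`(X, Y) ↦ (a X g, ᵗa⁻¹ Y g)`. The rank normal form of `Y` makes `Y = diag(1, 0)`; the symmetry
of `ᵗX Y` then forces `X` to be block lower triangular with a symmetric upper-left block `A`
and an invertible lower-right block, so column operations clear the lower-left block. Sylvester's
law of inertia diagonalises `A` by a congruence, and a permutation sorts the resulting diagonal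
pairs into the order of `V^{(k;r,s)}`.
-/

open Matrix Finset

/-- The columns of `fromRows X Y` form a basis of a Lagrangian subspace. -/
structure IsLagrangianFrame {ι : Type*} [Fintype ι] (X Y : Matrix ι ι ℝ) : Prop where
  transpose_mul_comm : Xᵀ * Y = Yᵀ * X
  eq_zero_of_mulVec_eq_zero : ∀ v, X *ᵥ v = 0 → Y *ᵥ v = 0 → v = 0

/-- If `(X, Y)` frames `λ`, then `(X', Y')` frames `ι(a) · λ`, up to the change of basis `g`. -/
def FrameEquiv {ι : Type*} [Fintype ι] [DecidableEq ι] (X Y X' Y' : Matrix ι ι ℝ) : Prop :=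
  ∃ a g : Matrix ι ι ℝ, IsUnit a ∧ IsUnit g ∧ a * X * g = X' ∧ (aᵀ)⁻¹ * Y * g = Y'

theorem IsLagrangianFrame.submatrix {ι κ : Type*} [Fintype ι] [Fintype κ] {X Y : Matrix ι ι ℝ}
    (h : IsLagrangianFrame X Y) (e : κ ≃ ι) :
    IsLagrangianFrame (X.submatrix e e) (Y.submatrix e e) where
  transpose_mul_comm := by simp [transpose_submatrix, h.transpose_mul_comm]
  eq_zero_of_mulVec_eq_zero v hX hY := by
    rw [submatrix_mulVec_equiv] at hX hY
    have hv := h.eq_zero_of_mulVec_eq_zero (v ∘ e.symm)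
      (funext fun i => by simpa using congrFun hX (e.symm i))
      (funext fun i => by simpa using congrFun hY (e.symm i))
    exact funext fun k => by simpa using congrFun hv (e k)

section Frames

variable {ι κ : Type*} [Fintype ι] [DecidableEq ι] [Fintype κ] [DecidableEq κ]
  {X Y X' Y' X'' Y'' : Matrix ι ι ℝ}

theorem IsUnit.eq_zero_of_mulVec_eq_zero {K : Type*} [Field K] {a : Matrix ι ι K} (ha : IsUnit a)
    {v : ι → K} (hv : a *ᵥ v = 0) : v = 0 :=
  mulVec_injective_iff_isUnit.2 ha (by rw [hv, mulVec_zero])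

namespace FrameEquiv

theorem refl (X Y : Matrix ι ι ℝ) : FrameEquiv X Y X Y :=
  ⟨1, 1, isUnit_one, isUnit_one, by simp, by simp⟩

theorem trans (h : FrameEquiv X Y X' Y') (h' : FrameEquiv X' Y' X'' Y'') :
    FrameEquiv X Y X'' Y'' := by
  obtain ⟨a, g, ha, hg, rfl, rfl⟩ := h
  obtain ⟨a', g', ha', hg', rfl, rfl⟩ := h'
  refine ⟨a' * a, g * g', ha'.mul ha, hg.mul hg', by simp only [Matrix.mul_assoc], ?_⟩
  rw [transpose_mul, Matrix.mul_inv_rev]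
  simp only [Matrix.mul_assoc]

theorem submatrix (h : FrameEquiv X Y X' Y') (e : κ ≃ ι) :
    FrameEquiv (X.submatrix e e) (Y.submatrix e e) (X'.submatrix e e) (Y'.submatrix e e) := by
  obtain ⟨a, g, ha, hg, rfl, rfl⟩ := h
  refine ⟨a.submatrix e e, g.submatrix e e, (isUnit_submatrix_equiv e e).2 ha,
    (isUnit_submatrix_equiv e e).2 hg, by simp, ?_⟩
  rw [transpose_submatrix, inv_submatrix_equiv]
  simp

theorem isLagrangianFrame (h : FrameEquiv X Y X' Y') (hXY : IsLagrangianFrame X Y) :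
    IsLagrangianFrame X' Y' := by
  obtain ⟨a, g, ha, hg, rfl, rfl⟩ := h
  have hat : IsUnit aᵀ.det := by rw [det_transpose]; exact (isUnit_iff_isUnit_det a).1 ha
  constructor
  · calc (a * X * g)ᵀ * ((aᵀ)⁻¹ * Y * g) = gᵀ * (Xᵀ * Y) * g := by
          simp only [transpose_mul, Matrix.mul_assoc, mul_nonsing_inv_cancel_left _ _ hat]
      _ = gᵀ * (Yᵀ * X) * g := by rw [hXY.transpose_mul_comm]
      _ = ((aᵀ)⁻¹ * Y * g)ᵀ * (a * X * g) := by
          simp only [transpose_mul, transpose_nonsing_inv, transpose_transpose, Matrix.mul_assoc,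
            nonsing_inv_mul_cancel_left _ _ ((isUnit_iff_isUnit_det a).1 ha)]
  · intro v hX hY
    rw [← mulVec_mulVec, ← mulVec_mulVec] at hX hY
    exact hg.eq_zero_of_mulVec_eq_zero <| hXY.eq_zero_of_mulVec_eq_zero _
      (ha.eq_zero_of_mulVec_eq_zero hX)
      ((isUnit_nonsing_inv_iff.2 ((isUnit_transpose _).2 ha)).eq_zero_of_mulVec_eq_zero hY)

end FrameEquiv

theorem frameEquiv_transpose_inv_mul_mul {P Q : Matrix ι ι ℝ} (hP : IsUnit P) (hQ : IsUnit Q) :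
    FrameEquiv X Y ((Pᵀ)⁻¹ * X * Q) (P * Y * Q) :=
  ⟨(Pᵀ)⁻¹, Q, isUnit_nonsing_inv_iff.2 ((isUnit_transpose _).2 hP), hQ, rfl, by
    rw [transpose_nonsing_inv, transpose_transpose,
      nonsing_inv_nonsing_inv _ ((isUnit_iff_isUnit_det P).1 hP)]⟩

theorem frameEquiv_submatrix_perm (σ : Equiv.Perm ι) :
    FrameEquiv X Y (X.submatrix σ σ) (Y.submatrix σ σ) := by
  refine ⟨(1 : Matrix ι ι ℝ).submatrix σ (Equiv.refl ι),
    (1 : Matrix ι ι ℝ).submatrix (Equiv.refl ι) σ,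
    (isUnit_submatrix_equiv _ _).2 isUnit_one, (isUnit_submatrix_equiv _ _).2 isUnit_one, ?_, ?_⟩
  · rw [one_submatrix_mul, mul_submatrix_one]
    simp
  · rw [transpose_submatrix, transpose_one, inv_submatrix_equiv, inv_one, one_submatrix_mul,
      mul_submatrix_one]
    simp

end Frames

section Blocks

variable {α β : Type*} [Fintype α] [DecidableEq α] [Fintype β] [DecidableEq β]

theorem FrameEquiv.fromBlocks {X₁ Y₁ X₁' Y₁' : Matrix α α ℝ} {X₂ Y₂ X₂' Y₂' : Matrix β β ℝ}
    (h₁ : FrameEquiv X₁ Y₁ X₁' Y₁') (h₂ : FrameEquiv X₂ Y₂ X₂' Y₂') :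
    FrameEquiv (fromBlocks X₁ 0 0 X₂) (fromBlocks Y₁ 0 0 Y₂)
      (fromBlocks X₁' 0 0 X₂') (fromBlocks Y₁' 0 0 Y₂') := by
  obtain ⟨a₁, g₁, ha₁, hg₁, rfl, rfl⟩ := h₁
  obtain ⟨a₂, g₂, ha₂, hg₂, rfl, rfl⟩ := h₂
  have isUnit_fromBlocks {u₁ : Matrix α α ℝ} {u₂ : Matrix β β ℝ} (hu₁ : IsUnit u₁)
      (hu₂ : IsUnit u₂) : IsUnit (Matrix.fromBlocks u₁ 0 0 u₂) := by
    rw [isUnit_iff_isUnit_det, det_fromBlocks_zero₁₂]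
    exact ((isUnit_iff_isUnit_det _).1 hu₁).mul ((isUnit_iff_isUnit_det _).1 hu₂)
  refine ⟨Matrix.fromBlocks a₁ 0 0 a₂, Matrix.fromBlocks g₁ 0 0 g₂, isUnit_fromBlocks ha₁ ha₂,
    isUnit_fromBlocks hg₁ hg₂, by simp [fromBlocks_multiply], ?_⟩
  rw [fromBlocks_transpose, transpose_zero, transpose_zero,
    inv_fromBlocks_zero₁₂_of_isUnit_iff _ _ _
      (iff_of_true ((isUnit_transpose _).2 ha₁) ((isUnit_transpose _).2 ha₂))]
  simp [fromBlocks_multiply]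

theorem frameEquiv_fromBlocks_zero₁₂ (A : Matrix α α ℝ) (C : Matrix β α ℝ) {D : Matrix β β ℝ}
    (hD : IsUnit D) :
    FrameEquiv (fromBlocks A 0 C D) (fromBlocks 1 0 0 0)
      (fromBlocks A 0 0 1) (fromBlocks 1 0 0 0) := by
  have hD' : IsUnit D.det := (isUnit_iff_isUnit_det D).1 hD
  refine ⟨1, fromBlocks 1 0 (-(D⁻¹ * C)) D⁻¹, isUnit_one, ?_, ?_, by simp [fromBlocks_multiply]⟩
  · rw [isUnit_iff_isUnit_det, det_fromBlocks_zero₁₂, det_one, one_mul, det_nonsing_inv]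
    exact hD'.ringInverse
  · simp [fromBlocks_multiply, mul_nonsing_inv_cancel_left _ _ hD', mul_nonsing_inv _ hD']

theorem IsLagrangianFrame.exists_eq_fromBlocks {X : Matrix (α ⊕ β) (α ⊕ β) ℝ}
    (h : IsLagrangianFrame X (fromBlocks 1 0 0 0)) :
    ∃ A C D, A.IsSymm ∧ IsUnit D ∧ X = fromBlocks A 0 C D := by
  have hX := (fromBlocks_toBlocks X).symm
  have hsymm := h.transpose_mul_comm
  rw [hX] at hsymm
  simp only [fromBlocks_transpose, fromBlocks_multiply, fromBlocks_inj, transpose_one,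
    transpose_zero, Matrix.mul_one, Matrix.mul_zero, Matrix.one_mul, Matrix.zero_mul,
    add_zero] at hsymm
  obtain ⟨hA, hB, -⟩ := hsymm
  rw [← hB] at hX
  refine ⟨X.toBlocks₁₁, X.toBlocks₂₁, X.toBlocks₂₂, hA, ?_, hX⟩
  refine mulVec_injective_iff_isUnit.1 fun u u' huu' => sub_eq_zero.1 ?_
  have hv := h.eq_zero_of_mulVec_eq_zero (Sum.elim 0 (u - u')) ?_ ?_
  · simpa using congrArg (· ∘ Sum.inr) hv
  · rw [hX, fromBlocks_mulVec]
    simp [mulVec_sub, huu']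
  · simp [fromBlocks_mulVec]

end Blocks

theorem Matrix.IsHermitian.exists_isUnit_transpose_mul_mul_eq_diagonal_sign {ι : Type*} [Fintype ι]
    [DecidableEq ι] {A : Matrix ι ι ℝ} (hA : A.IsHermitian) :
    ∃ c : Matrix ι ι ℝ, IsUnit c ∧ cᵀ * A * c = diagonal (Real.sign ∘ hA.eigenvalues) := by
  set U : Matrix ι ι ℝ := (hA.eigenvectorUnitary : Matrix ι ι ℝ)
  have hstar : star U = Uᵀ := by rw [star_eq_conjTranspose, conjTranspose_eq_transpose_of_trivial]
  have hU : Uᵀ * A * U = diagonal hA.eigenvalues := by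
    rw [← hstar]
    simpa [Unitary.conjStarAlgAut_apply] using hA.conjStarAlgAut_star_eigenvectorUnitary
  have hUU : Uᵀ * U = 1 := by rw [← hstar]; exact Unitary.coe_star_mul_self _
  set w : ι → ℝ := fun i => if hA.eigenvalues i = 0 then 1 else (√|hA.eigenvalues i|)⁻¹
  have hw : ∀ i, w i * hA.eigenvalues i * w i = Real.sign (hA.eigenvalues i) := by
    intro i
    simp only [w]
    split_ifs with h0
    · simp [h0]
    · have hsq : (√|hA.eigenvalues i|)⁻¹ * hA.eigenvalues i * (√|hA.eigenvalues i|)⁻¹ =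
          hA.eigenvalues i / |hA.eigenvalues i| := by
        rw [mul_right_comm, ← mul_inv, Real.mul_self_sqrt (abs_nonneg _), inv_mul_eq_div]
      rcases lt_or_gt_of_ne h0 with hneg | hpos
      · rw [hsq, Real.sign_of_neg hneg, abs_of_neg hneg, div_neg, div_self h0]
      · rw [hsq, Real.sign_of_pos hpos, abs_of_pos hpos, div_self h0]
  refine ⟨U * diagonal w, (IsUnit.of_mul_eq_one_right _ hUU).mul ?_, ?_⟩
  · refine isUnit_diagonal.2 (Pi.isUnit_iff.2 fun i => ?_)
    simp only [w]
    split_ifs with h0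
    · exact isUnit_one
    · exact (inv_pos.2 (Real.sqrt_pos.2 (abs_pos.2 h0))).ne'.isUnit
  · rw [transpose_mul, diagonal_transpose]
    calc diagonal w * Uᵀ * A * (U * diagonal w) = diagonal w * (Uᵀ * A * U) * diagonal w := by
          simp only [Matrix.mul_assoc]
      _ = _ := by
          rw [hU, diagonal_mul_diagonal, diagonal_mul_diagonal]
          exact congrArg diagonal (funext hw)

/-- `V^{(k;r,s)}` is spanned by the vectors `(vX j • eᵢ, vY j • eᵢ)` with `j = vBlock n k r s i`;
the four blocks have sizes `r`, `s`, `n - k - r - s` and `k`. -/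
def vX : Fin 4 → ℝ := ![-1, 1, 0, 1]

def vY : Fin 4 → ℝ := ![1, 1, 1, 0]

def vBlock (n k r s : ℕ) (i : Fin n) : Fin 4 :=
  if (i : ℕ) < r then 0 else if (i : ℕ) < r + s then 1 else if (i : ℕ) < n - k then 2 else 3

theorem isLagrangianFrame_diagonal {ι : Type*} [Fintype ι] [DecidableEq ι] (t : ι → Fin 4) :
    IsLagrangianFrame (diagonal (vX ∘ t)) (diagonal (vY ∘ t)) where
  transpose_mul_comm := by rw [diagonal_transpose, diagonal_transpose, diagonal_mul_diagonal,
    diagonal_mul_diagonal, funext fun i => mul_comm ((vX ∘ t) i) ((vY ∘ t) i)]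
  eq_zero_of_mulVec_eq_zero v hX hY := funext fun i => by
    have hXi := congrFun hX i
    have hYi := congrFun hY i
    simp only [mulVec_diagonal, Function.comp_apply, Pi.zero_apply] at hXi hYi
    generalize t i = j at hXi hYi
    fin_cases j <;> simp_all [vX, vY]

theorem IsLagrangianFrame.exists_frameEquiv_diagonal_of_fromBlocks {α β : Type*} [Fintype α]
    [DecidableEq α] [Fintype β] [DecidableEq β] {X : Matrix (α ⊕ β) (α ⊕ β) ℝ}
    (h : IsLagrangianFrame X (fromBlocks 1 0 0 0)) :
    ∃ t : α ⊕ β → Fin 4,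
      FrameEquiv X (fromBlocks 1 0 0 0) (diagonal (vX ∘ t)) (diagonal (vY ∘ t)) := by
  obtain ⟨A, C, D, hA, hD, rfl⟩ := h.exists_eq_fromBlocks
  have hAh : A.IsHermitian := isHermitian_iff_isSymm.2 hA
  set μ := hAh.eigenvalues
  obtain ⟨c, hc, hcAc⟩ := hAh.exists_isUnit_transpose_mul_mul_eq_diagonal_sign
  have hsylvester : FrameEquiv A 1 (diagonal (Real.sign ∘ μ)) 1 :=
    ⟨cᵀ, c, (isUnit_transpose _).2 hc, hc, hcAc, by
      rw [transpose_transpose, Matrix.mul_one, nonsing_inv_mul _ ((isUnit_iff_isUnit_det c).1 hc)]⟩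
  refine ⟨Sum.elim (fun i => if μ i < 0 then 0 else if 0 < μ i then 1 else 2) fun _ => 3, ?_⟩
  convert (frameEquiv_fromBlocks_zero₁₂ A C hD).trans (hsylvester.fromBlocks (.refl 1 0)) using 1
  · rw [← diagonal_one, fromBlocks_diagonal]
    congr 1
    ext (i | i) <;> simp [vX, Real.sign]
    split_ifs <;> rfl
  · rw [← diagonal_one, ← diagonal_zero, fromBlocks_diagonal]
    congr 1
    ext (i | i) <;> simp [vY]
    split_ifs <;> rfl

theorem IsLagrangianFrame.exists_frameEquiv_diagonal {ι : Type*} [Fintype ι] [DecidableEq ι]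
    {X Y : Matrix ι ι ℝ} (h : IsLagrangianFrame X Y) :
    ∃ t : ι → Fin 4, FrameEquiv X Y (diagonal (vX ∘ t)) (diagonal (vY ∘ t)) := by
  obtain ⟨V, U, e, hV, hU, hVYU⟩ := Y.exists_rank_normal_form
  have h₁ : FrameEquiv X Y ((Vᵀ)⁻¹ * X * U) ((fromBlocks 1 0 0 0).submatrix e e) :=
    hVYU ▸ frameEquiv_transpose_inv_mul_mul hV hU
  have h₂ := (h₁.isLagrangianFrame h).submatrix e.symm
  rw [submatrix_submatrix, e.self_comp_symm, submatrix_id_id] at h₂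
  obtain ⟨t, ht⟩ := h₂.exists_frameEquiv_diagonal_of_fromBlocks
  refine ⟨t ∘ e, h₁.trans ?_⟩
  simpa [submatrix_submatrix, submatrix_diagonal_equiv, Function.comp_assoc] using ht.submatrix e

theorem exists_perm_comp_eq_vBlock {n : ℕ} (t : Fin n → Fin 4) :
    ∃ k r s, k ≤ n ∧ r + s ≤ n - k ∧ ∃ σ : Equiv.Perm (Fin n), t ∘ σ = vBlock n k r s := by
  set σ := Tuple.sort t
  set c : Fin 4 → ℕ := fun a => #{i | (t ∘ σ) i ≤ a}
  have hc (i : Fin n) (a : Fin 4) : (i : ℕ) < c a ↔ (t ∘ σ) i ≤ a :=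
    Tuple.lt_card_le_iff_apply_le_of_monotone (Tuple.monotone_sort t)
  have hc_mono : Monotone c := fun a b hab =>
    card_le_card fun i hi => by simp only [mem_filter] at hi ⊢; exact ⟨hi.1, hi.2.trans hab⟩
  have hc01 : c 0 ≤ c 1 := hc_mono (by decide)
  have hc12 : c 1 ≤ c 2 := hc_mono (by decide)
  have hc2 : c 2 ≤ n := (card_filter_le _ _).trans (by simp)
  refine ⟨n - c 2, c 0, c 1 - c 0, by omega, by omega, σ, funext fun i => ?_⟩
  have h0 := hc i 0
  have h1 := hc i 1
  have h2 := hc i 2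
  simp only [vBlock]
  split_ifs <;> omega

theorem vkrs_eq_range_fromRows {n k r s : ℕ} (hrs : r + s ≤ n - k) :
    Vkrs n k r s = LinearMap.range
      (fromRows (diagonal (vX ∘ vBlock n k r s)) (diagonal (vY ∘ vBlock n k r s))).mulVecLin := by
  unfold Vkrs
  congr 3 <;> ext i j <;> by_cases hij : i = j
  all_goals simp [hij, zetaMat, vBlock, vX, vY, diagonal_apply, one_apply]
  all_goals split_ifs <;> first | rfl | omega | simp

theorem Submodule.exists_range_mulVecLin_eq {K m : Type*} [Field K] [Fintype m] {n : ℕ}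
    {W : Submodule K (m → K)} (hW : Module.finrank K W = n) :
    ∃ M : Matrix m (Fin n) K, LinearMap.range M.mulVecLin = W := by
  refine ⟨LinearMap.toMatrix' (W.subtype ∘ₗ (Module.finBasisOfFinrankEq K W hW).equivFun.symm), ?_⟩
  rw [← Matrix.toLin'_apply', Matrix.toLin'_toMatrix', LinearMap.range_comp, LinearEquiv.range,
    Submodule.map_top, Submodule.range_subtype]

theorem Matrix.map_range_mulVecLin {K l m n : Type*} [CommSemiring K] [Fintype m] [Fintype n]
    (A : Matrix l m K) (B : Matrix m n K) :
    (LinearMap.range B.mulVecLin).map A.mulVecLin = LinearMap.range (A * B).mulVecLin := by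
  rw [mulVecLin_mul, LinearMap.range_comp]

theorem Matrix.range_mulVecLin_mul_of_isUnit {K m n : Type*} [Field K] [Fintype n] [DecidableEq n]
    (M : Matrix m n K) {g : Matrix n n K} (hg : IsUnit g) :
    LinearMap.range (M * g).mulVecLin = LinearMap.range M.mulVecLin := by
  rw [mulVecLin_mul, LinearMap.range_comp_of_range_eq_top _
    (LinearMap.range_eq_top.2 (mulVec_surjective_iff_isUnit.2 hg))]

section Symplectic

variable {n : ℕ}

theorem iota_mul_fromRows (a X Y : Matrix (Fin n) (Fin n) ℝ) :
    iota n a * fromRows X Y = fromRows (a * X) ((aᵀ)⁻¹ * Y) := by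
  simp [iota, fromBlocks_mul_fromRows]

theorem fromRows_mulVec_dotProduct_JJ_mulVec (X Y : Matrix (Fin n) (Fin n) ℝ) (w w' : Fin n → ℝ) :
    (fromRows X Y *ᵥ w) ⬝ᵥ JJ n *ᵥ (fromRows X Y *ᵥ w') = w ⬝ᵥ (Yᵀ * X - Xᵀ * Y) *ᵥ w' := by
  simp [JJ, fromRows_mulVec, fromBlocks_mulVec, sub_mulVec, dotProduct_sub, ← mulVec_mulVec,
    dotProduct_mulVec, vecMul_transpose, vecMul_neg, neg_vecMul, neg_dotProduct]
  ring

theorem isLagrangian_range_fromRows_iff {X Y : Matrix (Fin n) (Fin n) ℝ} :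
    IsLagrangian n (LinearMap.range (fromRows X Y).mulVecLin) ↔ IsLagrangianFrame X Y := by
  have hrank : Module.finrank ℝ (LinearMap.range (fromRows X Y).mulVecLin) = n ↔
      ∀ v, X *ᵥ v = 0 → Y *ᵥ v = 0 → v = 0 := by
    have hsum := LinearMap.finrank_range_add_finrank_ker (fromRows X Y).mulVecLin
    rw [Module.finrank_fin_fun] at hsum
    rw [show Module.finrank ℝ _ = n ↔ Module.finrank ℝ (LinearMap.ker (fromRows X Y).mulVecLin) = 0
      by omega, Submodule.finrank_eq_zero, Submodule.eq_bot_iff]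
    simp [fromRows_mulVec, funext_iff, Sum.forall]
  have hiso : (∀ u ∈ LinearMap.range (fromRows X Y).mulVecLin,
      ∀ v ∈ LinearMap.range (fromRows X Y).mulVecLin, u ⬝ᵥ JJ n *ᵥ v = 0) ↔ Xᵀ * Y = Yᵀ * X := by
    simp only [LinearMap.mem_range, forall_exists_index, forall_apply_eq_imp_iff, mulVecLin_apply,
      fromRows_mulVec_dotProduct_JJ_mulVec]
    refine ⟨fun h => (sub_eq_zero.1 (Matrix.ext fun i j => ?_)).symm, fun h w w' => ?_⟩
    · simpa using h (Pi.single i 1) (Pi.single j 1)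
    · rw [h, sub_self, zero_mulVec, dotProduct_zero]
  rw [IsLagrangian, hrank, hiso]
  exact ⟨fun ⟨h₁, h₂⟩ => ⟨h₂, h₁⟩, fun ⟨h₁, h₂⟩ => ⟨h₂, h₁⟩⟩

end Symplectic

theorem stmt6 (n : ℕ) :
    (∀ k r s : ℕ, k ≤ n → r + s ≤ n - k → IsLagrangian n (Vkrs n k r s)) ∧
    (∀ lam : Submodule ℝ (Fin n ⊕ Fin n → ℝ), IsLagrangian n lam →
      ∃ k r s : ℕ, k ≤ n ∧ r + s ≤ n - k ∧
        ∃ a : Matrix (Fin n) (Fin n) ℝ, IsUnit a ∧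
          Submodule.map (Matrix.mulVecLin (iota n a)) lam = Vkrs n k r s) := by
  refine ⟨fun k r s _ hrs => ?_, fun lam hlam => ?_⟩
  · rw [vkrs_eq_range_fromRows hrs, isLagrangian_range_fromRows_iff]
    exact isLagrangianFrame_diagonal _
  · obtain ⟨M, rfl⟩ := Submodule.exists_range_mulVecLin_eq hlam.1
    rw [← fromRows_toRows M] at hlam ⊢
    obtain ⟨t, ht⟩ := (isLagrangian_range_fromRows_iff.1 hlam).exists_frameEquiv_diagonal
    obtain ⟨k, r, s, hk, hrs, σ, hσ⟩ := exists_perm_comp_eq_vBlock t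
    obtain ⟨a, g, ha, hg, hX, hY⟩ := ht.trans (frameEquiv_submatrix_perm σ)
    refine ⟨k, r, s, hk, hrs, a, ha, ?_⟩
    rw [map_range_mulVecLin, iota_mul_fromRows, ← range_mulVecLin_mul_of_isUnit _ hg, fromRows_mul,
      hX, hY, vkrs_eq_range_fromRows hrs, ← hσ, submatrix_diagonal_equiv, submatrix_diagonal_equiv]
    rfl
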